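/- For λ = −4, the set of free critical points of O_p(·,−4) is {−1, i, −i}: for z₀ ∈ ℂ with z₀ ≠ 0 and 1 + 4z₀ + 6z₀² + 4z₀³ + 5z₀⁴ ≠ 0, the complex derivative of z ↦ O_p(z,−4) at z₀ equals 0 if and only if z₀ ∈ {−1, i, −i}. Moreover, the critical polynomial factors as −(1+z)⁴ − 4(1 − z + z² − z³ + z⁴) = −5(z² + 1)². -/

import Mathlib

/-!
Writing `A = (1 + z)⁴`, the operator is `O_p(z,λ) = z⁴(A − λ)/(A − λz⁴)`, and the numerator of its
quotient-rule derivative collapses to `−4z³(1 + z)⁴ · (−(1 + z)⁴ + λ(1 − z + z² − z³ + z⁴))`,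
using `1 − z⁴ = (1 − z)(1 + z)(1 + z²)`. So away from the poles the critical points are `0`, `−1`
and the roots of the bracket, which for `λ = −4` is `−5(z² + 1)²`.
-/

/-- The rational operator of Kim's family (η = μ = 0, parameter `lam`) on
quadratic polynomials, after Möbius conjugation:
`O_p(z,λ) = −z⁴((1−λ)+4z+6z²+4z³+z⁴)/(−1−4z−6z²−4z³+(λ−1)z⁴)`. -/
noncomputable def Op (lam z : ℂ) : ℂ :=
  -z ^ 4 * ((1 - lam) + 4 * z + 6 * z ^ 2 + 4 * z ^ 3 + z ^ 4) /
    (-1 - 4 * z - 6 * z ^ 2 - 4 * z ^ 3 + (lam - 1) * z ^ 4)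

def critPoly (lam z : ℂ) : ℂ :=
  -(1 + z) ^ 4 + lam * (1 - z + z ^ 2 - z ^ 3 + z ^ 4)

theorem critPoly_neg_four (z : ℂ) : critPoly (-4) z = -5 * (z ^ 2 + 1) ^ 2 := by
  unfold critPoly
  ring

theorem Op_eq_div (lam z : ℂ) :
    Op lam z = z ^ 4 * ((1 + z) ^ 4 - lam) / ((1 + z) ^ 4 - lam * z ^ 4) := by
  rw [Op, ← neg_div_neg_eq]
  congr 1 <;> ring

theorem hasDerivAt_Op {lam z : ℂ} (hz : (1 + z) ^ 4 - lam * z ^ 4 ≠ 0) :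
    HasDerivAt (Op lam)
      (-4 * z ^ 3 * (1 + z) ^ 4 * critPoly lam z / ((1 + z) ^ 4 - lam * z ^ 4) ^ 2) z := by
  have hA : HasDerivAt (fun w : ℂ => (1 + w) ^ 4) (4 * (1 + z) ^ 3) z := by
    simpa using ((hasDerivAt_id z).const_add 1).fun_pow 4
  have hP : HasDerivAt (fun w : ℂ => w ^ 4) (4 * z ^ 3) z := by
    simpa using hasDerivAt_pow 4 z
  rw [funext (Op_eq_div lam)]
  refine ((hP.mul (hA.sub_const lam)).div (hA.sub (hP.const_mul lam)) hz).congr_deriv ?_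
  simp only [Pi.mul_apply, Pi.sub_apply, critPoly]
  ring

theorem deriv_Op_eq_zero_iff {lam z : ℂ} (hz : (1 + z) ^ 4 - lam * z ^ 4 ≠ 0) :
    deriv (Op lam) z = 0 ↔ z = 0 ∨ z = -1 ∨ critPoly lam z = 0 := by
  rw [(hasDerivAt_Op hz).deriv, div_eq_zero_iff]
  simp [hz, add_eq_zero_iff_eq_neg', or_assoc]

theorem Complex.sq_add_one_eq_zero_iff {z : ℂ} : z ^ 2 + 1 = 0 ↔ z = Complex.I ∨ z = -Complex.I := by
  rw [← sq_eq_sq_iff_eq_or_eq_neg, Complex.I_sq, add_eq_zero_iff_eq_neg]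

/-- For `λ = −4`, the free critical points of `O_p(·,−4)` are `−1`, `i`, `−i`;
moreover the critical polynomial factors as `−5(z²+1)²`. -/
theorem free_critical_points_lam_neg_four :
    (∀ z₀ : ℂ, z₀ ≠ 0 →
      1 + 4 * z₀ + 6 * z₀ ^ 2 + 4 * z₀ ^ 3 + 5 * z₀ ^ 4 ≠ 0 →
      (deriv (fun z => Op (-4) z) z₀ = 0 ↔
        z₀ = -1 ∨ z₀ = Complex.I ∨ z₀ = -Complex.I)) ∧
    (∀ z : ℂ, -(1 + z) ^ 4 - 4 * (1 - z + z ^ 2 - z ^ 3 + z ^ 4) =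
      -5 * (z ^ 2 + 1) ^ 2) := by
  refine ⟨fun z₀ hz₀ hpole => ?_, fun z => by
    simpa only [critPoly, neg_mul, ← sub_eq_add_neg] using critPoly_neg_four z⟩
  have hden : (1 + z₀) ^ 4 - (-4) * z₀ ^ 4 ≠ 0 := fun h => hpole (by linear_combination h)
  rw [deriv_Op_eq_zero_iff hden, critPoly_neg_four]
  simp [hz₀, Complex.sq_add_one_eq_zero_iff]
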